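/- Assume in addition that F ≥ 0 on ℝ and that the stabilization constants satisfy the strict inequalities A > L²γ/(16ε²) and B > L/(2ε). Then the increments of the SL-CN solution are square-summable, ∑_{n≥1} ‖δ_tφ^{n+1}‖² < ∞, and in particular ‖φ^{n+1} − φ^n‖ → 0 as n → ∞. -/

import Mathlib

/-!
Test the scheme against `μⁿ⁺¹ᐟ²`. Symmetry of `K` turns the Crank–Nicolson term into the jump of
the quadratic energy, and the `B` term into the jump of `(B/2)‖δₜφ‖²` plus `(B/2)‖δₜ²φ‖²`, while
the scheme itself gives `⟪δₜφ, μ⟫ = -τγ⟪Kμ, μ⟫ ≤ 0`. Taylor expansion about the midpoint, with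
`|f'| ≤ L`, bounds the jump of `∑ F(φᵢ)` by the explicit term plus
`L/4 ‖δₜφ‖² + L/2 ‖δₜ²φ‖ ‖δₜφ‖`. Young's inequality absorbs the mixed term into `(B/2)‖δₜ²φ‖²`,
and Cauchy–Schwarz for the form `⟪K·,·⟫` (using `δₜφ = -τγ Kμ`) bounds `‖δₜφ‖²` by the
dissipation `Aτ⟪Kδₜφ, δₜφ⟫ + τγ⟪Kμ, μ⟫`. Under the conditions on `A` and `B`, the nonnegative
modified energy `E(φⁿ⁺¹) + (B/2)‖δₜφⁿ⁺¹‖²` thus drops by a fixed multiple of `‖δₜφⁿ⁺¹‖²` at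
every step; summing the steps gives square-summability.
-/

open scoped RealInnerProductSpace NNReal
open Finset Filter

theorem ConvexOn.add_mul_sub_le_of_hasDerivAt {f : ℝ → ℝ} {f' x : ℝ}
    (hf : ConvexOn ℝ Set.univ f) (hfx : HasDerivAt f f' x) (y : ℝ) :
    f x + f' * (y - x) ≤ f y := by
  rcases lt_trichotomy x y with hxy | rfl | hxy
  · have := hf.le_slope_of_hasDerivAt (Set.mem_univ x) (Set.mem_univ y) hxy hfx
    rw [slope_def_field, le_div_iff₀ (sub_pos.2 hxy)] at this
    linarith
  · simp
  · have := hf.slope_le_of_hasDerivAt (Set.mem_univ y) (Set.mem_univ x) hxy hfx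
    rw [slope_def_field, div_le_iff₀ (sub_pos.2 hxy)] at this
    linarith

theorem abs_sub_sub_deriv_mul_le {F : ℝ → ℝ} {L : ℝ≥0} (hF : Differentiable ℝ F)
    (hF' : LipschitzWith L (deriv F)) (x y : ℝ) :
    |F y - F x - deriv F x * (y - x)| ≤ L / 2 * (y - x) ^ 2 := by
  -- `L/2 t² + σ F t` is convex for `|σ| ≤ 1`, so it lies above its tangent line at `x`.
  have tangent (σ : ℝ) (hσ : |σ| ≤ 1) :
      L / 2 * x ^ 2 + σ * F x + (L * x + σ * deriv F x) * (y - x) ≤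
        L / 2 * y ^ 2 + σ * F y := by
    have hderiv (t : ℝ) :
        HasDerivAt (fun t => L / 2 * t ^ 2 + σ * F t) (L * t + σ * deriv F t) t := by
      refine (((hasDerivAt_pow 2 t).const_mul (L / 2 : ℝ)).fun_add
        ((hF t).hasDerivAt.const_mul σ)).congr_deriv ?_
      norm_num
      ring
    refine ConvexOn.add_mul_sub_le_of_hasDerivAt ?_ (hderiv x) y
    refine Monotone.convexOn_univ_of_deriv (fun t => (hderiv t).differentiableAt) ?_
    intro s t hst
    have hlip : |deriv F t - deriv F s| ≤ L * (t - s) := by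
      simpa [Real.dist_eq, abs_of_nonneg (sub_nonneg.2 hst)] using hF'.dist_le_mul t s
    have : |σ * (deriv F t - deriv F s)| ≤ L * (t - s) := by
      rw [abs_mul]
      exact (mul_le_of_le_one_left (abs_nonneg _) hσ).trans hlip
    rw [(hderiv s).deriv, (hderiv t).deriv]
    linarith [neg_abs_le (σ * (deriv F t - deriv F s))]
  have h₁ := tangent 1 (by norm_num)
  have h₂ := tangent (-1) (by norm_num)
  rw [abs_le]
  constructor <;> nlinarith

theorem sub_le_deriv_mul_add {F : ℝ → ℝ} {L : ℝ≥0} (hF : Differentiable ℝ F)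
    (hF' : LipschitzWith L (deriv F)) (a b p : ℝ) :
    F b - F a ≤
      deriv F p * (b - a) + L / 4 * (b - a) ^ 2 + L * (|(a + b) / 2 - p| * |b - a|) := by
  have hb := abs_le.1 (abs_sub_sub_deriv_mul_le hF hF' ((a + b) / 2) b)
  have ha := abs_le.1 (abs_sub_sub_deriv_mul_le hF hF' ((a + b) / 2) a)
  have hp : (deriv F ((a + b) / 2) - deriv F p) * (b - a) ≤
      L * (|(a + b) / 2 - p| * |b - a|) := by
    calc _ ≤ |deriv F ((a + b) / 2) - deriv F p| * |b - a| := by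
          rw [← abs_mul]; exact le_abs_self _
      _ ≤ L * |(a + b) / 2 - p| * |b - a| := by
          gcongr; simpa [Real.dist_eq] using hF'.dist_le_mul ((a + b) / 2) p
      _ = _ := mul_assoc _ _ _
  nlinarith

theorem mul_le_mul_sq_add_sq_div {B : ℝ} (hB : 0 < B) (u v : ℝ) :
    u * v ≤ B / 2 * u ^ 2 + v ^ 2 / (2 * B) := by
  have key : B / 2 * u ^ 2 + v ^ 2 / (2 * B) - u * v = (B * u - v) ^ 2 / (2 * B) := by
    field_simp
    ring
  have : 0 ≤ (B * u - v) ^ 2 / (2 * B) := by positivity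
  linarith

section InnerProduct

variable {E : Type*} [NormedAddCommGroup E] [InnerProductSpace ℝ E] {K : E →ₗ[ℝ] E}

theorem LinearMap.IsSymmetric.inner_sub_apply_midpoint (hK : K.IsSymmetric) (x y : E) :
    ⟪x - y, K ((1 / 2 : ℝ) • (x + y))⟫ = (⟪K x, x⟫ - ⟪K y, y⟫) / 2 := by
  have hxy : ⟪y, K x⟫ = ⟪x, K y⟫ := by rw [← hK, real_inner_comm]
  simp only [map_smul, map_add, real_inner_smul_right, inner_sub_left, inner_add_right, hxy,
    real_inner_comm (K x), real_inner_comm (K y)]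
  ring

theorem inner_sub_second_difference (x y z : E) :
    ⟪x - y, x - (2 : ℝ) • y + z⟫ =
      (‖x - y‖ ^ 2 - ‖y - z‖ ^ 2 + ‖x - (2 : ℝ) • y + z‖ ^ 2) / 2 := by
  have h := norm_sub_sq_real (x - y) (x - (2 : ℝ) • y + z)
  rw [show x - y - (x - (2 : ℝ) • y + z) = y - z by module] at h
  linarith

theorem LinearMap.IsPositive.two_mul_sqrt_mul_abs_inner_le (hK : K.IsPositive) {a b : ℝ}
    (ha : 0 ≤ a) (hb : 0 ≤ b) (u v : E) :
    2 * √(a * b) * |⟪K u, v⟫| ≤ a * ⟪K u, u⟫ + b * ⟪K v, v⟫ := by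
  have hsym : ⟪K v, u⟫ = ⟪K u, v⟫ := by rw [hK.isSymmetric, real_inner_comm]
  have expand (t : ℝ) : 0 ≤ a * ⟪K u, u⟫ + 2 * (√a * t) * ⟪K u, v⟫ + t ^ 2 * ⟪K v, v⟫ := by
    have := hK.re_inner_nonneg_left (√a • u + t • v)
    simp only [RCLike.re_to_real, map_add, map_smul, inner_add_left, inner_add_right,
      real_inner_smul_left, real_inner_smul_right, hsym] at this
    have hQ : a * ⟪K u, u⟫ = √a * (√a * ⟪K u, u⟫) := by
      rw [← mul_assoc, Real.mul_self_sqrt ha]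
    linarith
  rw [Real.sqrt_mul ha]
  rcases abs_cases ⟪K u, v⟫ with ⟨h, -⟩ | ⟨h, -⟩ <;> rw [h]
  · have := expand (-√b)
    rw [neg_sq, Real.sq_sqrt hb] at this
    linarith
  · have := expand √b
    rw [Real.sq_sqrt hb] at this
    linarith

theorem LinearMap.IsPositive.mul_norm_sq_le_of_eq_smul_apply (hK : K.IsPositive) {τ γ A : ℝ}
    (hτ : 0 < τ) (hγ : 0 < γ) (hA : 0 ≤ A) {d μ : E} (hd : d = -(τ * γ) • K μ) :
    2 * √(A * γ) / γ * ‖d‖ ^ 2 ≤ A * τ * ⟪K d, d⟫ + τ * γ * ⟪K μ, μ⟫ := by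
  have hcs := hK.two_mul_sqrt_mul_abs_inner_le hA hγ.le d μ
  have hinner : ⟪K d, μ⟫ = -(‖d‖ ^ 2 / (τ * γ)) := by
    rw [hK.isSymmetric, ← real_inner_self_eq_norm_sq]
    nth_rewrite 2 [hd]
    rw [real_inner_smul_left, real_inner_comm]
    field_simp
  rw [hinner, abs_neg, abs_of_nonneg (by positivity)] at hcs
  calc 2 * √(A * γ) / γ * ‖d‖ ^ 2 = τ * (2 * √(A * γ) * (‖d‖ ^ 2 / (τ * γ))) := by
        field_simp
    _ ≤ τ * (A * ⟪K d, d⟫ + γ * ⟪K μ, μ⟫) := by gcongr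
    _ = _ := by ring

end InnerProduct

section Energy

variable {ι : Type*} [Fintype ι]

theorem EuclideanSpace.sum_norm_mul_norm_le (u v : EuclideanSpace ℝ ι) :
    ∑ i, ‖u i‖ * ‖v i‖ ≤ ‖u‖ * ‖v‖ := by
  simpa only [EuclideanSpace.norm_eq] using Real.sum_mul_le_sqrt_mul_sqrt univ (‖u ·‖) (‖v ·‖)

theorem sum_sub_sum_le_inner_add {F : ℝ → ℝ} {L : ℝ≥0} (hF : Differentiable ℝ F)
    (hF' : LipschitzWith L (deriv F)) {x y p g : EuclideanSpace ℝ ι}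
    (hg : ∀ i, g i = deriv F (p i)) :
    ∑ i, F (y i) - ∑ i, F (x i) ≤
      ⟪y - x, g⟫ + L / 4 * ‖y - x‖ ^ 2 + L * (‖(1 / 2 : ℝ) • (x + y) - p‖ * ‖y - x‖) := by
  calc ∑ i, F (y i) - ∑ i, F (x i)
      ≤ ∑ i, (g i * (y - x) i + L / 4 * ‖(y - x) i‖ ^ 2
          + L * (‖((1 / 2 : ℝ) • (x + y) - p) i‖ * ‖(y - x) i‖)) := by
        rw [← sum_sub_distrib]
        refine sum_le_sum fun i _ => ?_
        simp only [hg, Real.norm_eq_abs, PiLp.sub_apply, PiLp.add_apply, PiLp.smul_apply,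
          smul_eq_mul, one_div_mul_eq_div, sq_abs]
        linarith [sub_le_deriv_mul_add hF hF' (x i) (y i) (p i)]
    _ = ⟪y - x, g⟫ + L / 4 * ‖y - x‖ ^ 2
          + L * ∑ i, ‖((1 / 2 : ℝ) • (x + y) - p) i‖ * ‖(y - x) i‖ := by
        simp only [sum_add_distrib, ← mul_sum, EuclideanSpace.norm_sq_eq, PiLp.inner_apply,
          RCLike.inner_apply, conj_trivial]
    _ ≤ _ := by gcongr; exact EuclideanSpace.sum_norm_mul_norm_le _ _

noncomputable def cahnHilliardEnergy (K : EuclideanSpace ℝ ι →ₗ[ℝ] EuclideanSpace ℝ ι)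
    (F : ℝ → ℝ) (ε : ℝ) (φ : EuclideanSpace ℝ ι) : ℝ :=
  ε / 2 * ⟪K φ, φ⟫ + ε⁻¹ * ∑ i, F (φ i)

noncomputable def modifiedEnergy (K : EuclideanSpace ℝ ι →ₗ[ℝ] EuclideanSpace ℝ ι)
    (F : ℝ → ℝ) (ε B : ℝ) (φ ψ : EuclideanSpace ℝ ι) : ℝ :=
  cahnHilliardEnergy K F ε φ + B / 2 * ‖φ - ψ‖ ^ 2

theorem modifiedEnergy_nonneg {K : EuclideanSpace ℝ ι →ₗ[ℝ] EuclideanSpace ℝ ι}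
    (hK : ∀ x, 0 ≤ ⟪K x, x⟫) {F : ℝ → ℝ} (hF : ∀ t, 0 ≤ F t) {ε B : ℝ} (hε : 0 ≤ ε)
    (hB : 0 ≤ B) (φ ψ : EuclideanSpace ℝ ι) : 0 ≤ modifiedEnergy K F ε B φ ψ := by
  unfold modifiedEnergy cahnHilliardEnergy
  have := hK φ
  have : 0 ≤ ∑ i, F (φ i) := sum_nonneg fun i _ => hF _
  positivity

/-- `2√(Aγ)/γ` is what the `A`-stabilization buys back in the absorption step; `L/(4ε)` and
`L²/(8ε²B)` are lost to the explicit extrapolation of `f`. -/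
noncomputable def decayRate (γ ε A B L : ℝ) : ℝ :=
  2 * √(A * γ) / γ - L / (4 * ε) - L ^ 2 / (8 * ε ^ 2 * B)

theorem decayRate_pos {L γ ε A B : ℝ} (hL : 0 ≤ L) (hγ : 0 < γ) (hε : 0 < ε)
    (hA : L ^ 2 * γ / (16 * ε ^ 2) < A) (hB : L / (2 * ε) < B) :
    0 < decayRate γ ε A B L := by
  have hsqrt : L * γ / (4 * ε) < √(A * γ) := by
    rw [Real.lt_sqrt (by positivity)]
    calc (L * γ / (4 * ε)) ^ 2 = L ^ 2 * γ / (16 * ε ^ 2) * γ := by ring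
      _ < A * γ := by gcongr
  have h₁ : L / (2 * ε) < 2 * √(A * γ) / γ := by
    rw [lt_div_iff₀ hγ]
    linarith [show L / (2 * ε) * γ = 2 * (L * γ / (4 * ε)) by ring]
  have h₂ : L ^ 2 / (8 * ε ^ 2 * B) ≤ L / (4 * ε) := by
    have hB' : 0 < B := (by positivity : 0 ≤ L / (2 * ε)).trans_lt hB
    rw [div_le_div_iff₀ (by positivity) (by positivity)]
    have := (div_lt_iff₀ (by positivity : (0 : ℝ) < 2 * ε)).1 hB
    nlinarith [mul_le_mul_of_nonneg_left this.le (by positivity : 0 ≤ 4 * ε * L)]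
  unfold decayRate
  linarith [show L / (2 * ε) = 2 * (L / (4 * ε)) by ring]

theorem modifiedEnergy_add_le {K : EuclideanSpace ℝ ι →ₗ[ℝ] EuclideanSpace ℝ ι}
    (hK : K.IsPositive) {F : ℝ → ℝ} {L : ℝ≥0} (hF : Differentiable ℝ F)
    (hF' : LipschitzWith L (deriv F)) {τ γ ε A B : ℝ} (hτ : 0 < τ) (hγ : 0 < γ) (hε : 0 < ε)
    (hA : 0 ≤ A) (hB : 0 < B) {x y z μ : EuclideanSpace ℝ ι}
    (hφ : (1 / τ) • (x - y) = -γ • K μ)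
    (hμ : μ = ε • K ((1 / 2 : ℝ) • (x + y)) +
      (1 / ε) • (WithLp.equiv 2 (ι → ℝ)).symm
        (fun i => deriv F ((3 / 2) * y i - (1 / 2) * z i)) +
      (A * τ) • K (x - y) + B • (x - (2 : ℝ) • y + z)) :
    modifiedEnergy K F ε B x y + decayRate γ ε A B L * ‖x - y‖ ^ 2 ≤
      modifiedEnergy K F ε B y z := by
  set g := (WithLp.equiv 2 (ι → ℝ)).symm (fun i => deriv F ((3 / 2) * y i - (1 / 2) * z i))
  have hd : x - y = -(τ * γ) • K μ := by
    simpa [smul_smul, hτ.ne', mul_comm] using congrArg (τ • ·) hφ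
  have hdissip : ⟪x - y, μ⟫ = -(τ * γ) * ⟪K μ, μ⟫ := by rw [hd, real_inner_smul_left]
  have hexpand : ⟪x - y, μ⟫ = ε * ((⟪K x, x⟫ - ⟪K y, y⟫) / 2) + (1 / ε) * ⟪x - y, g⟫ +
      A * τ * ⟪K (x - y), x - y⟫ +
      B * ((‖x - y‖ ^ 2 - ‖y - z‖ ^ 2 + ‖x - (2 : ℝ) • y + z‖ ^ 2) / 2) := by
    rw [hμ, inner_add_right, inner_add_right, inner_add_right, real_inner_smul_right,
      real_inner_smul_right, real_inner_smul_right, real_inner_smul_right,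
      hK.isSymmetric.inner_sub_apply_midpoint, inner_sub_second_difference,
      real_inner_comm (K (x - y))]
  have htaylor := sum_sub_sum_le_inner_add hF hF' (x := y) (y := x)
    (p := (3 / 2 : ℝ) • y - (1 / 2 : ℝ) • z) (g := g) (by simp [g])
  rw [show (1 / 2 : ℝ) • (y + x) - ((3 / 2 : ℝ) • y - (1 / 2 : ℝ) • z) =
      (1 / 2 : ℝ) • (x - (2 : ℝ) • y + z) by module,
    norm_smul, norm_div, norm_one, Real.norm_ofNat] at htaylor
  have hF := mul_le_mul_of_nonneg_left htaylor (inv_nonneg.2 hε.le)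
  have habsorb := hK.mul_norm_sq_le_of_eq_smul_apply hτ hγ hA hd
  have hyoung := mul_le_mul_sq_add_sq_div hB ‖x - (2 : ℝ) • y + z‖ (L / (2 * ε) * ‖x - y‖)
  unfold modifiedEnergy cahnHilliardEnergy decayRate
  linear_combination hF + hyoung + habsorb - hexpand + hdissip

end Energy

theorem summable_of_add_le {u a : ℕ → ℝ} (hu : ∀ n, 0 ≤ u n) (ha : ∀ n, 0 ≤ a n)
    (h : ∀ n, u (n + 1) + a n ≤ u n) : Summable a := by
  have htele (N : ℕ) : u N + ∑ i ∈ range N, a i ≤ u 0 := by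
    induction N with
    | zero => simp
    | succ N ih => rw [sum_range_succ]; linarith [h N]
  exact summable_of_sum_range_le ha fun N => by linarith [htele N, hu N]

theorem stmt_5_general {M : ℕ}
    (K : EuclideanSpace ℝ (Fin M) →ₗ[ℝ] EuclideanSpace ℝ (Fin M))
    (hKsa : ∀ x y : EuclideanSpace ℝ (Fin M), ⟪K x, y⟫ = ⟪x, K y⟫)
    (hKpsd : ∀ x : EuclideanSpace ℝ (Fin M), 0 ≤ ⟪K x, x⟫)
    (F : ℝ → ℝ) (hF : ContDiff ℝ 2 F) (hFnonneg : ∀ x : ℝ, 0 ≤ F x)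
    (L : ℝ) (hf' : ∀ x : ℝ, |deriv (deriv F) x| ≤ L)
    (τ γ ε : ℝ) (hτ : 0 < τ) (hγ : 0 < γ) (hε : 0 < ε)
    (A B : ℝ)
    (φ μc : ℕ → EuclideanSpace ℝ (Fin M))
    (hscheme1 : ∀ n, 1 ≤ n → (1/τ) • (φ (n+1) - φ n) = -γ • K (μc n))
    (hscheme2 : ∀ n, 1 ≤ n → μc n =
      ε • K ((1/2 : ℝ) • (φ (n+1) + φ n)) +
      (1/ε) • ((WithLp.equiv 2 (Fin M → ℝ)).symm
          (fun i => deriv F ((3/2) * φ n i - (1/2) * φ (n-1) i))) +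
      (A * τ) • K (φ (n+1) - φ n) +
      B • (φ (n+1) - (2:ℝ) • φ n + φ (n-1)))
    (hAcond : A > L^2 * γ / (16 * ε^2)) (hBcond : B > L / (2 * ε)) :
    Summable (fun n : ℕ => ‖φ (n+1+1) - φ (n+1)‖^2) ∧
    Tendsto (fun n : ℕ => ‖φ (n+1) - φ n‖) atTop (nhds 0) := by
  have hL : 0 ≤ L := (abs_nonneg _).trans (hf' 0)
  have hA : 0 ≤ A := (by positivity : 0 ≤ L ^ 2 * γ / (16 * ε ^ 2)).trans hAcond.le
  have hB : 0 < B := (by positivity : 0 ≤ L / (2 * ε)).trans_lt hBcond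
  have hc := decayRate_pos hL hγ hε hAcond hBcond
  have hK : K.IsPositive := ⟨hKsa, by simpa using hKpsd⟩
  have hF' : LipschitzWith L.toNNReal (deriv F) :=
    lipschitzWith_of_nnnorm_deriv_le hF.differentiable_deriv_two fun x => by
      simpa [← NNReal.coe_le_coe, Real.coe_toNNReal L hL] using hf' x
  have hstep (n : ℕ) :=
    modifiedEnergy_add_le hK (hF.differentiable two_ne_zero) hF' hτ hγ hε hA hB
      (hscheme1 (n + 1) (by omega))
      (by simpa only [Nat.add_sub_cancel] using hscheme2 (n + 1) (by omega))
  rw [Real.coe_toNNReal L hL] at hstep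
  have hsum := summable_of_add_le
    (fun n => modifiedEnergy_nonneg hKpsd hFnonneg hε.le hB.le (φ (n + 1)) (φ n))
    (fun n => mul_nonneg hc.le (sq_nonneg _)) hstep
  have hsq := (summable_mul_left_iff hc.ne').1 hsum
  refine ⟨hsq, (tendsto_add_atTop_iff_nat 1).1 ?_⟩
  simpa only [Real.sqrt_sq (norm_nonneg _), Real.sqrt_zero] using hsq.tendsto_atTop_zero.sqrt

/-- Remark 2.3: with `F ≥ 0` and strict stabilization inequalities, the increments of
the SL-CN solution are square-summable, hence `‖φⁿ⁺¹ − φⁿ‖ → 0`: the numerical solution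
approaches a steady state. -/
theorem stmt_5 {M : ℕ}
    (K : EuclideanSpace ℝ (Fin M) →ₗ[ℝ] EuclideanSpace ℝ (Fin M))
    (hKsa : ∀ x y : EuclideanSpace ℝ (Fin M), ⟪K x, y⟫ = ⟪x, K y⟫)
    (hKpsd : ∀ x : EuclideanSpace ℝ (Fin M), 0 ≤ ⟪K x, x⟫)
    (F : ℝ → ℝ) (hF : ContDiff ℝ 2 F) (hFnonneg : ∀ x : ℝ, 0 ≤ F x)
    (L : ℝ) (hL : 0 ≤ L) (hf' : ∀ x : ℝ, |deriv (deriv F) x| ≤ L)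
    (τ γ ε : ℝ) (hτ : 0 < τ) (hγ : 0 < γ) (hε : 0 < ε)
    (A B : ℝ) (hA : 0 ≤ A) (hB : 0 ≤ B)
    (φ μc : ℕ → EuclideanSpace ℝ (Fin M))
    (hscheme1 : ∀ n, 1 ≤ n → (1/τ) • (φ (n+1) - φ n) = -γ • K (μc n))
    (hscheme2 : ∀ n, 1 ≤ n → μc n =
      ε • K ((1/2 : ℝ) • (φ (n+1) + φ n)) +
      (1/ε) • ((WithLp.equiv 2 (Fin M → ℝ)).symm
          (fun i => deriv F ((3/2) * φ n i - (1/2) * φ (n-1) i))) +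
      (A * τ) • K (φ (n+1) - φ n) +
      B • (φ (n+1) - (2:ℝ) • φ n + φ (n-1)))
    (hAcond : A > L^2 * γ / (16 * ε^2)) (hBcond : B > L / (2 * ε)) :
    Summable (fun n : ℕ => ‖φ (n+1+1) - φ (n+1)‖^2) ∧
    Tendsto (fun n : ℕ => ‖φ (n+1) - φ n‖) atTop (nhds 0) :=
  stmt_5_general K hKsa hKpsd F hF hFnonneg L hf' τ γ ε hτ hγ hε A B φ μc hscheme1 hscheme2 hAcond
    hBcond
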